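/- arXiv:1709.00075 — 5 statements merged into one kernel-verified Lean document; each statement's English description precedes it below -/
import Mathlib

section
/- For every integer n ≥ 2, with α = 3·⌈log n⌉, the real number q_n = Σ_{k=1}^{n} C(n, k) · C(n, k−1) · ((k−1)/n)^{kα} satisfies q_n ≤ 1/2. -/
/-!
Put `x = (k - 1)/n` and `j = n + 1 - k`. The Padé bound `log x ≤ -2(1 - x)/(1 + x)` together
with `α ≥ 3 log n` gives `x^(kα) ≤ n^(-2k)` when `2k ≤ n` and `x^(kα) ≤ n^(-(2j+1))` when
`2k > n`. Since `C(n,k-1) ≤ n^(k-1)`, respectively `C(n,k) C(n,k-1) = C(n,j-1) C(n,j)` with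
`C(n,j-1) ≤ n^(j-1)`, the `k`-th summand is at most `a_k / n`, respectively `a_j / n²`, where
`a_m = C(n,m)/n^m` are the terms of the binomial expansion of `(1 + 1/n)^n ≤ e`. Hence
`q_n ≤ ((1 + 1/n)^n - 2)/n + ((1 + 1/n)^n - 1)/n²`, which is at most `1/2`.
-/

open Finset Real

lemma two_mul_one_sub_div_one_add_le_neg_log {x : ℝ} (hx0 : 0 < x) (hx1 : x < 1) :
    2 * (1 - x) / (1 + x) ≤ -log x := by
  have hx1' : 0 < 1 - x := sub_pos.2 hx1
  -- the first term of `log (1 + a⁻¹) = ∑ 2 (2a + 1)^(-(2i+1)) / (2i + 1)` at `a = x / (1 - x)`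
  have h := le_hasSum (hasSum_log_one_add_inv (div_pos hx0 hx1')) 0 fun _ _ => by positivity
  have h1 : 1 + (x / (1 - x))⁻¹ = x⁻¹ := by field_simp; ring
  have h2 : 1 / (2 * (x / (1 - x)) + 1) = (1 - x) / (1 + x) := by field_simp; ring
  rw [h1, h2, log_inv] at h
  norm_num at h
  rwa [mul_div_assoc]

lemma pow_le_inv_pow_of_log_le {x N : ℝ} {a k e : ℕ} (hx0 : 0 < x) (hx1 : x < 1) (hN : 1 ≤ N)
    (ha : 3 * log N ≤ a) (he : e * (1 + x) ≤ 6 * k * (1 - x)) :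
    x ^ (k * a) ≤ (N ^ e)⁻¹ := by
  rw [← log_le_log_iff (by positivity) (by positivity), log_pow, log_inv, log_pow]
  have he' : (e : ℝ) ≤ 3 * k * (2 * (1 - x) / (1 + x)) := by
    rw [mul_div_assoc', le_div_iff₀ (by linarith)]
    linarith
  have hx : 0 ≤ 2 * (1 - x) / (1 + x) := div_nonneg (by linarith) (by linarith)
  suffices e * log N ≤ k * a * -log x by push_cast; linarith
  calc e * log N ≤ 3 * k * (2 * (1 - x) / (1 + x)) * log N :=
        mul_le_mul_of_nonneg_right he' (log_nonneg hN)
    _ = k * (3 * log N) * (2 * (1 - x) / (1 + x)) := by ring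
    _ ≤ k * a * -log x := by
        gcongr
        exact two_mul_one_sub_div_one_add_le_neg_log hx0 hx1

lemma pred_div_pow_le_inv_pow {n k e : ℕ} (hk : 2 ≤ k) (hkn : k ≤ n)
    (he : (e : ℝ) * (n + k - 1) ≤ 6 * k * (n + 1 - k)) :
    (((k - 1 : ℕ) : ℝ) / n) ^ (k * (3 * ⌈log n⌉₊)) ≤ ((n : ℝ) ^ e)⁻¹ := by
  have hk' : (2 : ℝ) ≤ k := by exact_mod_cast hk
  have hkn' : (k : ℝ) ≤ n := by exact_mod_cast hkn
  have hn : (0 : ℝ) < n := by linarith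
  rw [Nat.cast_pred (by omega)]
  apply pow_le_inv_pow_of_log_le (div_pos (by linarith) hn) ((div_lt_one hn).2 (by linarith))
    (by linarith)
  · push_cast
    gcongr
    exact Nat.le_ceil _
  · have h1 : (e : ℝ) * (1 + (k - 1) / n) = e * (n + k - 1) / n := by field_simp; ring
    have h2 : 6 * k * (1 - (k - 1 : ℝ) / n) = 6 * k * (n + 1 - k) / n := by field_simp; ring
    rw [h1, h2]
    gcongr

noncomputable def qTerm (n k : ℕ) : ℝ :=
  (n.choose k : ℝ) * (n.choose (k - 1) : ℝ) *
    (((k - 1 : ℕ) : ℝ) / (n : ℝ)) ^ (k * (3 * ⌈Real.log n⌉₊))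

lemma qTerm_one {n : ℕ} (hn : 2 ≤ n) : qTerm n 1 = 0 := by
  have : 0 < ⌈log n⌉₊ := Nat.ceil_pos.2 (log_pos (by exact_mod_cast hn))
  simp [qTerm, this.ne']

lemma qTerm_le_of_two_mul_le {n k : ℕ} (hk : 2 ≤ k) (h : 2 * k ≤ n) :
    qTerm n k ≤ n.choose k / (n : ℝ) ^ k / n := by
  have hpow := pred_div_pow_le_inv_pow (n := n) (e := 2 * k) hk (by omega) (by
    have : (2 * k : ℝ) ≤ n := by exact_mod_cast h
    push_cast
    nlinarith)
  have hchoose : (n.choose (k - 1) : ℝ) ≤ (n : ℝ) ^ (k - 1) := by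
    exact_mod_cast Nat.choose_le_pow n (k - 1)
  have hn : (0 : ℝ) < n := by exact_mod_cast (by omega : 0 < n)
  calc qTerm n k ≤ n.choose k * (n : ℝ) ^ (k - 1) * ((n : ℝ) ^ (2 * k))⁻¹ := by
        unfold qTerm
        gcongr
    _ = n.choose k / (n : ℝ) ^ k / n := by
        obtain ⟨i, rfl⟩ : ∃ i, k = i + 1 := ⟨k - 1, by omega⟩
        rw [Nat.add_sub_cancel]
        field_simp
        ring

lemma qTerm_le_of_le_two_mul {n k : ℕ} (hk : 2 ≤ k) (hkn : k ≤ n) (h : n + 1 ≤ 2 * k) :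
    qTerm n k ≤ n.choose (n + 1 - k) / (n : ℝ) ^ (n + 1 - k) / n ^ 2 := by
  obtain ⟨i, rfl⟩ : ∃ i, n = k + i := ⟨n - k, by omega⟩
  have hpow := pred_div_pow_le_inv_pow (n := k + i) (e := 2 * i + 3) hk (by omega) (by
    have : (i + 1 : ℝ) ≤ k := by exact_mod_cast (by omega : i + 1 ≤ k)
    push_cast
    nlinarith)
  have hsymm₁ : (k + i).choose k = (k + i).choose i := by
    rw [← Nat.choose_symm (by omega)]; congr 1; omega
  have hsymm₂ : (k + i).choose (k - 1) = (k + i).choose (i + 1) := by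
    rw [← Nat.choose_symm (by omega)]; congr 1; omega
  have hchoose : ((k + i).choose i : ℝ) ≤ ((k + i : ℕ) : ℝ) ^ i := by
    exact_mod_cast Nat.choose_le_pow (k + i) i
  have hn : (0 : ℝ) < (k + i : ℕ) := by exact_mod_cast (by omega : 0 < k + i)
  rw [show k + i + 1 - k = i + 1 by omega]
  calc qTerm (k + i) k
      ≤ ((k + i : ℕ) : ℝ) ^ i * (k + i).choose (i + 1) * (((k + i : ℕ) : ℝ) ^ (2 * i + 3))⁻¹ := by
        unfold qTerm
        rw [hsymm₁, hsymm₂]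
        gcongr
    _ = (k + i).choose (i + 1) / ((k + i : ℕ) : ℝ) ^ (i + 1) / ((k + i : ℕ) : ℝ) ^ 2 := by
        field_simp
        ring

lemma qTerm_le {n k : ℕ} (hk : k ∈ Ioc 1 n) :
    qTerm n k ≤ n.choose k / (n : ℝ) ^ k / n +
      n.choose (n + 1 - k) / (n : ℝ) ^ (n + 1 - k) / n ^ 2 := by
  rw [mem_Ioc] at hk
  by_cases h : 2 * k ≤ n
  · exact le_add_of_le_of_nonneg (qTerm_le_of_two_mul_le hk.1 h) (by positivity)
  · exact le_add_of_nonneg_of_le (by positivity) (qTerm_le_of_le_two_mul hk.1 hk.2 (by omega))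

lemma sum_Icc_choose_div_pow (n : ℕ) :
    ∑ m ∈ Icc 1 n, (n.choose m : ℝ) / (n : ℝ) ^ m = (1 + (n : ℝ)⁻¹) ^ n - 1 := by
  rw [add_comm 1, add_pow, range_eq_Ico, sum_eq_sum_Ico_succ_bot (by omega),
    ← Ico_add_one_right_eq_Icc]
  simp [div_eq_mul_inv, mul_comm]

lemma sum_Ioc_choose_div_pow {n : ℕ} (hn : 1 ≤ n) :
    ∑ m ∈ Ioc 1 n, (n.choose m : ℝ) / (n : ℝ) ^ m = (1 + (n : ℝ)⁻¹) ^ n - 2 := by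
  have h := sum_Icc_choose_div_pow n
  rw [Icc_eq_cons_Ioc hn, sum_cons] at h
  have : (n : ℝ) ≠ 0 := by positivity
  simp only [Nat.choose_one_right, pow_one, ne_eq, this, not_false_eq_true, div_self] at h
  linarith

lemma sum_Ioc_reflect_le_sum_Icc {f : ℕ → ℝ} (hf : ∀ m, 0 ≤ f m) (n : ℕ) :
    ∑ k ∈ Ioc 1 n, f (n + 1 - k) ≤ ∑ m ∈ Icc 1 n, f m := by
  rw [← Ico_add_one_add_one_eq_Ioc, sum_Ico_reflect f _ (by omega),
    show n + 1 + 1 - (n + 1) = 1 by omega, show n + 1 + 1 - (1 + 1) = n by omega]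
  exact sum_le_sum_of_subset_of_nonneg Ico_subset_Icc_self fun m _ _ => hf m

lemma one_add_inv_pow_sub_div_add_le_half {n : ℕ} (hn : 2 ≤ n) :
    ((1 + (n : ℝ)⁻¹) ^ n - 2) / n + ((1 + (n : ℝ)⁻¹) ^ n - 1) / n ^ 2 ≤ 1 / 2 := by
  rcases hn.eq_or_lt with rfl | hn
  · norm_num
  have hn' : (3 : ℝ) ≤ n := by exact_mod_cast hn
  have hE : (1 + (n : ℝ)⁻¹) ^ n ≤ 2.7182818286 := one_add_inv_pow_le_exp.trans exp_one_lt_d9.le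
  have hE2 : 2 ≤ (1 + (n : ℝ)⁻¹) ^ n := by
    have := one_add_mul_le_pow (a := (n : ℝ)⁻¹)
      (le_trans (by norm_num) (inv_nonneg.2 n.cast_nonneg)) n
    rwa [mul_inv_cancel₀ (by positivity), one_add_one_eq_two] at this
  calc ((1 + (n : ℝ)⁻¹) ^ n - 2) / n + ((1 + (n : ℝ)⁻¹) ^ n - 1) / n ^ 2
      ≤ ((1 + (n : ℝ)⁻¹) ^ n - 2) / 3 + ((1 + (n : ℝ)⁻¹) ^ n - 1) / 3 ^ 2 := by
        gcongr
        linarith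
    _ ≤ 1 / 2 := by linarith

/-- For every integer `n ≥ 2`, with `a = 3⌈log n⌉`, the quantity
`q_n = ∑_{k=1}^{n} C(n,k) C(n,k-1) ((k-1)/n)^{k a}` is at most `1/2`. -/
theorem qn_le_half (n : ℕ) (hn : 2 ≤ n) :
    ∑ k ∈ Finset.Icc 1 n, (n.choose k : ℝ) * (n.choose (k - 1) : ℝ) *
        (((k - 1 : ℕ) : ℝ) / (n : ℝ)) ^ (k * (3 * ⌈Real.log n⌉₊)) ≤ 1 / 2 := by
  change ∑ k ∈ Icc 1 n, qTerm n k ≤ 1 / 2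
  rw [Icc_eq_cons_Ioc (by omega), sum_cons, qTerm_one hn, zero_add]
  calc ∑ k ∈ Ioc 1 n, qTerm n k
      ≤ ∑ k ∈ Ioc 1 n, (n.choose k / (n : ℝ) ^ k / n +
          n.choose (n + 1 - k) / (n : ℝ) ^ (n + 1 - k) / n ^ 2) :=
        sum_le_sum fun k hk => qTerm_le hk
    _ = (∑ k ∈ Ioc 1 n, n.choose k / (n : ℝ) ^ k) / n +
          (∑ k ∈ Ioc 1 n, n.choose (n + 1 - k) / (n : ℝ) ^ (n + 1 - k)) / n ^ 2 := by
        rw [sum_add_distrib, sum_div, sum_div]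
    _ ≤ ((1 + (n : ℝ)⁻¹) ^ n - 2) / n + ((1 + (n : ℝ)⁻¹) ^ n - 1) / n ^ 2 := by
        rw [sum_Ioc_choose_div_pow (by omega), ← sum_Icc_choose_div_pow]
        gcongr
        exact sum_Ioc_reflect_le_sum_Icc (f := fun m => (n.choose m : ℝ) / (n : ℝ) ^ m)
          (fun m => by positivity) n
    _ ≤ 1 / 2 := one_add_inv_pow_sub_div_add_le_half hn
end

section
/- For every integer n ≥ 2, with α = 3·⌈log n⌉, the following inequality holds in the real numbers: Σ_{k=1}^{n} C(n, k) · C(n, k−1) · ((k−1)/n)^{kα} ≤ 2 · Σ_{k=1}^{⌈n/2⌉} (e·n/k)^{2k} · exp(−((n−k+1)/n) · k · α). -/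
/-!
Bound `((k - 1) / n) ^ (k a)` by `exp (-(n - k + 1) k a / n)`. The resulting majorant
`C(n, k) C(n, k - 1) exp (-(n - k + 1) k a / n)` is invariant under `k ↦ n + 1 - k`, so its sum
over `1 ≤ k ≤ n` is at most twice the sum over `k ≤ ⌈n / 2⌉`, and there
`C(n, k - 1) ≤ C(n, k) ≤ (e n / k) ^ k`.
-/

open Finset Real

namespace Nat

theorem choose_le_exp_mul_div_pow (n k : ℕ) : (n.choose k : ℝ) ≤ (exp 1 * n / k) ^ k := by
  calc (n.choose k : ℝ) ≤ (n : ℝ) ^ k / k ! := choose_le_pow_div k n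
    _ = ((n : ℝ) / k) ^ k * ((k : ℝ) ^ k / k !) := by
      rcases k.eq_zero_or_pos with rfl | hk
      · simp
      · rw [div_pow, div_mul_div_cancel₀ (by positivity)]
    _ ≤ ((n : ℝ) / k) ^ k * exp k := by
      gcongr
      exact pow_div_factorial_le_exp _ (by positivity) k
    _ = (exp 1 * n / k) ^ k := by rw [mul_div_assoc, mul_pow, ← exp_nat_mul, mul_one, mul_comm]

theorem choose_pred_le_choose {n k : ℕ} (hk : 2 * k ≤ n + 1) :
    n.choose (k - 1) ≤ n.choose k := by
  rcases Nat.lt_or_ge (2 * k) (n + 1) with hlt | hmid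
  · rcases k.eq_zero_or_pos with rfl | hk0
    · rfl
    · simpa [Nat.sub_add_cancel hk0] using
        choose_le_succ_of_lt_half_left (n := n) (r := k - 1) (by omega)
  · rw [show k - 1 = n - k by omega, choose_symm (by omega)]

theorem choose_mul_choose_pred_reflect {n k : ℕ} (hk : 1 ≤ k) (hkn : k ≤ n) :
    n.choose (n + 1 - k) * n.choose (n + 1 - k - 1) = n.choose k * n.choose (k - 1) := by
  rw [show n + 1 - k - 1 = n - k by omega, choose_symm hkn, show n + 1 - k = n - (k - 1) by omega,
    choose_symm (by omega), mul_comm]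

theorem choose_mul_choose_pred_le {n k : ℕ} (hk : 2 * k ≤ n + 1) :
    (n.choose k : ℝ) * n.choose (k - 1) ≤ (exp 1 * n / k) ^ (2 * k) := by
  rw [pow_mul', sq]
  exact mul_le_mul (choose_le_exp_mul_div_pow n k)
    ((cast_le.mpr (choose_pred_le_choose hk)).trans (choose_le_exp_mul_div_pow n k))
    (by positivity) (by positivity)

end Nat

theorem Real.pow_le_exp_sub_one_mul {x : ℝ} (hx : 0 ≤ x) (m : ℕ) :
    x ^ m ≤ exp ((x - 1) * m) :=
  calc x ^ m ≤ exp (x - 1) ^ m := pow_le_pow_left₀ hx (by linarith [add_one_le_exp (x - 1)]) m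
    _ = exp ((x - 1) * m) := by rw [← exp_nat_mul, mul_comm]

theorem Real.pred_div_pow_le_exp {n k : ℕ} (hn : n ≠ 0) (hk : 1 ≤ k) (a : ℕ) :
    (((k - 1 : ℕ) : ℝ) / n) ^ (k * a) ≤ exp (-(((n : ℝ) - k + 1) / n) * k * a) := by
  refine (pow_le_exp_sub_one_mul (by positivity) _).trans_eq ?_
  congr 1
  push_cast [hk]
  field_simp
  ring

theorem Finset.sum_Icc_le_two_mul_sum_Icc_half_of_reflect {R : Type*} [Semiring R] [PartialOrder R]
    [IsOrderedRing R] {f : ℕ → R} {n : ℕ} (hf : ∀ k ∈ Icc 1 n, 0 ≤ f k)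
    (hreflect : ∀ k ∈ Icc 1 n, f (n + 1 - k) = f k) :
    ∑ k ∈ Icc 1 n, f k ≤ 2 * ∑ k ∈ Icc 1 ((n + 1) / 2), f k := by
  set m := (n + 1) / 2
  have hsplit : ∑ k ∈ Icc 1 n, f k = ∑ k ∈ Icc 1 m, f k + ∑ k ∈ Icc (m + 1) n, f k := by
    have := sum_Ioc_consecutive f (Nat.zero_le m) (show m ≤ n by omega)
    rw [← Icc_add_one_left_eq_Ioc, ← Icc_add_one_left_eq_Ioc, ← Icc_add_one_left_eq_Ioc,
      zero_add] at this
    exact this.symm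
  have hupper : ∑ k ∈ Icc (m + 1) n, f k = ∑ k ∈ Icc 1 (n - m), f k := by
    refine sum_nbij' (fun k => n + 1 - k) (fun k => n + 1 - k) ?_ ?_ ?_ ?_
      fun k hk => (hreflect k ?_).symm
    all_goals intros; simp only [mem_Icc] at *; omega
  have hshort : ∑ k ∈ Icc 1 (n - m), f k ≤ ∑ k ∈ Icc 1 m, f k :=
    sum_le_sum_of_subset_of_nonneg (Icc_subset_Icc_right (by omega))
      fun k hk _ => hf k (Icc_subset_Icc_right (by omega) hk)
  rw [hsplit, hupper, two_mul]
  exact add_le_add_right hshort _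

theorem qn_le_exponential_sum_general (n : ℕ) :
    ∑ k ∈ Finset.Icc 1 n, (n.choose k : ℝ) * (n.choose (k - 1) : ℝ) *
        (((k - 1 : ℕ) : ℝ) / (n : ℝ)) ^ (k * (3 * ⌈Real.log n⌉₊)) ≤
      2 * ∑ k ∈ Finset.Icc 1 ((n + 1) / 2),
        (Real.exp 1 * (n : ℝ) / (k : ℝ)) ^ (2 * k) *
          Real.exp (-(((n : ℝ) - (k : ℝ) + 1) / (n : ℝ)) * (k : ℝ) *
            ((3 * ⌈Real.log n⌉₊ : ℕ) : ℝ)) := by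
  set a : ℕ := 3 * ⌈Real.log n⌉₊
  set U : ℕ → ℝ := fun k => (n.choose k : ℝ) * n.choose (k - 1) *
    exp (-(((n : ℝ) - k + 1) / n) * k * a)
  have hU_reflect : ∀ k ∈ Icc 1 n, U (n + 1 - k) = U k := by
    intro k hk
    obtain ⟨hk1, hkn⟩ := mem_Icc.mp hk
    simp only [U]
    congr 1
    · exact_mod_cast Nat.choose_mul_choose_pred_reflect hk1 hkn
    · congr 1
      rw [Nat.cast_sub (show k ≤ n + 1 by omega)]
      push_cast
      ring
  calc _ ≤ ∑ k ∈ Icc 1 n, U k := by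
        refine sum_le_sum fun k hk => ?_
        obtain ⟨hk1, hkn⟩ := mem_Icc.mp hk
        simp only [U]
        gcongr
        exact pred_div_pow_le_exp (by omega) hk1 a
    _ ≤ 2 * ∑ k ∈ Icc 1 ((n + 1) / 2), U k :=
        sum_Icc_le_two_mul_sum_Icc_half_of_reflect (fun k _ => by positivity) hU_reflect
    _ ≤ _ := by
        simp only [U]
        gcongr with k hk
        exact Nat.choose_mul_choose_pred_le (by simp only [mem_Icc] at hk; omega)

/-- For every integer `n ≥ 2`, with `a = 3⌈log n⌉`,
`∑_{k=1}^{n} C(n,k) C(n,k-1) ((k-1)/n)^{k a}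
  ≤ 2 ∑_{k=1}^{⌈n/2⌉} (e n / k)^{2k} exp(-((n-k+1)/n) k a)`. -/
theorem qn_le_exponential_sum (n : ℕ) (hn : 2 ≤ n) :
    ∑ k ∈ Finset.Icc 1 n, (n.choose k : ℝ) * (n.choose (k - 1) : ℝ) *
        (((k - 1 : ℕ) : ℝ) / (n : ℝ)) ^ (k * (3 * ⌈Real.log n⌉₊)) ≤
      2 * ∑ k ∈ Finset.Icc 1 ((n + 1) / 2),
        (Real.exp 1 * (n : ℝ) / (k : ℝ)) ^ (2 * k) *
          Real.exp (-(((n : ℝ) - (k : ℝ) + 1) / (n : ℝ)) * (k : ℝ) *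
            ((3 * ⌈Real.log n⌉₊ : ℕ) : ℝ)) :=
  qn_le_exponential_sum_general n
end

section
/- For every integer n ≥ 2, with α = 3·⌈log n⌉, the following inequality holds in the real numbers: Σ_{k=1}^{n} C(n, k) · C(n, k−1) · ((k−1)/n)^{kα} ≤ 2 · Σ_{k=1}^{⌈n/2⌉} (e/k)^{2k} · n^{−k + 3k(k−1)/n}, where n^x denotes the real power exp(x · log n). -/
/-!
The products `C(n,j) C(n,j-1)` and `j (n+1-j)` are both invariant under `j ↦ n+1-j`.
Writing `(j-1)/n = 1 - (n+1-j)/n` and using `1 - x ≤ exp (-x)` together with `α ≥ 3 log n`,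
the `j`-th term is at most `C(n,j) C(n,j-1) n^(-3j(n+1-j)/n)`, which has the same symmetry;
so the sum is at most twice the sum of these majorants over `j ≤ ⌈n/2⌉`. In that range
`C(n,j-1) ≤ C(n,j) ≤ (e n/j)^j`, and collecting the powers of `n` gives the right-hand side.
-/

open Finset Real

theorem Nat.choose_le_exp_mul_div_pow_s9 (n k : ℕ) :
    (n.choose k : ℝ) ≤ (exp 1 * n / k) ^ k := by
  have hfac : (k : ℝ) ^ k / k.factorial ≤ exp k :=
    pow_div_factorial_le_exp (k : ℝ) k.cast_nonneg k
  rw [div_le_iff₀ (by positivity), ← exp_one_pow] at hfac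
  rcases k.eq_zero_or_pos with rfl | hk
  · simp
  rw [div_pow, mul_pow, le_div_iff₀ (by positivity)]
  calc (n.choose k : ℝ) * k ^ k ≤ n ^ k / k.factorial * (exp 1 ^ k * k.factorial) := by
        gcongr
        exact Nat.choose_le_pow_div k n
    _ = exp 1 ^ k * n ^ k := by field_simp

theorem Nat.choose_pred_le_choose_s9 {n k : ℕ} (hk : 2 * k ≤ n + 1) :
    n.choose (k - 1) ≤ n.choose k := by
  rcases k with _ | k
  · rfl
  refine Nat.le_of_mul_le_mul_right ?_ k.succ_pos
  rw [Nat.add_sub_cancel, Nat.choose_succ_right_eq]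
  exact Nat.mul_le_mul_left _ (by omega)

theorem Nat.choose_mul_choose_pred_le_s9 {n k : ℕ} (hk : 2 * k ≤ n + 1) :
    (n.choose k * n.choose (k - 1) : ℝ) ≤ (exp 1 * n / k) ^ (2 * k) := by
  calc (n.choose k * n.choose (k - 1) : ℝ) ≤ n.choose k * n.choose k := by
        gcongr
        exact_mod_cast Nat.choose_pred_le_choose_s9 hk
    _ ≤ (exp 1 * n / k) ^ k * (exp 1 * n / k) ^ k := by
        gcongr <;> exact Nat.choose_le_exp_mul_div_pow_s9 n k
    _ = (exp 1 * n / k) ^ (2 * k) := by ring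

theorem one_sub_pow_le_exp_neg_mul {x : ℝ} (hx : x ≤ 1) (N : ℕ) :
    (1 - x) ^ N ≤ exp (-(N * x)) := by
  calc (1 - x) ^ N ≤ exp (-x) ^ N := by
        gcongr
        exact one_sub_le_exp_neg x
    _ = exp (-(N * x)) := by rw [← exp_nat_mul, mul_neg]

theorem pow_pred_div_le_rpow {n j α : ℕ} (hn : 0 < n) (hj : 1 ≤ j) (hjn : j ≤ n + 1)
    (hα : 3 * log n ≤ α) :
    (((j - 1 : ℕ) : ℝ) / n) ^ (j * α) ≤
      (n : ℝ) ^ (-(3 * (j * ((n : ℝ) + 1 - j)) / n)) := by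
  have hn' : (0 : ℝ) < n := by exact_mod_cast hn
  have hjn' : (j : ℝ) ≤ n + 1 := by exact_mod_cast hjn
  have hbase : ((j - 1 : ℕ) : ℝ) / n = 1 - ((n : ℝ) + 1 - j) / n := by
    rw [Nat.cast_sub hj]; field_simp; ring
  rw [hbase, rpow_def_of_pos hn']
  refine (one_sub_pow_le_exp_neg_mul ?_ _).trans (exp_le_exp.2 ?_)
  · rw [div_le_one hn']; linarith [(Nat.one_le_cast (α := ℝ)).2 hj]
  · have hgap : 0 ≤ (j : ℝ) * (n + 1 - j) / n := by
      have : (0 : ℝ) ≤ n + 1 - j := by linarith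
      positivity
    calc -(((j * α : ℕ) : ℝ) * (((n : ℝ) + 1 - j) / n)) = -(α * (j * (n + 1 - j) / n)) := by
          push_cast; ring
      _ ≤ -(3 * log n * (j * (n + 1 - j) / n)) := neg_le_neg (by gcongr)
      _ = log n * -(3 * (j * ((n : ℝ) + 1 - j)) / n) := by ring

noncomputable def symmetricMajorant (n j : ℕ) : ℝ :=
  n.choose j * n.choose (j - 1) * (n : ℝ) ^ (-(3 * (j * ((n : ℝ) + 1 - j)) / n))

theorem symmetricMajorant_reflect {n j : ℕ} (hj : 1 ≤ j) (hjn : j ≤ n) :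
    symmetricMajorant n (n + 1 - j) = symmetricMajorant n j := by
  unfold symmetricMajorant
  rw [show n + 1 - j - 1 = n - j by omega, Nat.choose_symm hjn,
    show n + 1 - j = n - (j - 1) by omega, Nat.choose_symm (by omega), Nat.cast_sub (by omega),
    Nat.cast_sub hj]
  push_cast
  ring_nf

theorem le_symmetricMajorant {n j α : ℕ} (hj : 1 ≤ j) (hjn : j ≤ n)
    (hα : 3 * log n ≤ α) :
    (n.choose j : ℝ) * n.choose (j - 1) * (((j - 1 : ℕ) : ℝ) / n) ^ (j * α) ≤
      symmetricMajorant n j :=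
  mul_le_mul_of_nonneg_left (pow_pred_div_le_rpow (by omega) hj (by omega) hα) (by positivity)

theorem symmetricMajorant_le {n k : ℕ} (hk : 1 ≤ k) (hkn : 2 * k ≤ n + 1) :
    symmetricMajorant n k ≤
      (exp 1 / k) ^ (2 * k) * (n : ℝ) ^ (-(k : ℝ) + 3 * k * ((k : ℝ) - 1) / n) := by
  have hn : (0 : ℝ) < n := by exact_mod_cast (show 0 < n by omega)
  have hexp : -(k : ℝ) + 3 * k * ((k : ℝ) - 1) / n =
      (2 * k : ℕ) + -(3 * (k * ((n : ℝ) + 1 - k)) / n) := by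
    push_cast; field_simp; ring
  calc symmetricMajorant n k
      ≤ (exp 1 * n / k) ^ (2 * k) * (n : ℝ) ^ (-(3 * (k * ((n : ℝ) + 1 - k)) / n)) := by
        unfold symmetricMajorant
        gcongr
        exact Nat.choose_mul_choose_pred_le_s9 hkn
    _ = (exp 1 / k) ^ (2 * k) * (n : ℝ) ^ (-(k : ℝ) + 3 * k * ((k : ℝ) - 1) / n) := by
        rw [hexp, rpow_add hn, rpow_natCast]; ring

theorem sum_Icc_le_two_mul_sum_Icc_half {f : ℕ → ℝ} {n : ℕ}
    (hf : ∀ j ∈ Icc 1 n, 0 ≤ f j)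
    (hsymm : ∀ j ∈ Icc 1 n, f (n + 1 - j) = f j) :
    ∑ j ∈ Icc 1 n, f j ≤ 2 * ∑ j ∈ Icc 1 ((n + 1) / 2), f j := by
  set m := (n + 1) / 2
  have hmn : m ≤ n := by omega
  have hrest : n - m ≤ m := by omega
  have hIcc : ∀ k, Icc 1 k = Ioc 0 k := Icc_succ_left_eq_Ioc 0
  have hupper : ∑ j ∈ Ioc m n, f j = ∑ j ∈ Icc 1 (n - m), f j := by
    refine sum_nbij' (fun j => n + 1 - j) (fun j => n + 1 - j) ?_ ?_ ?_ ?_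
      fun j hj => (hsymm j ?_).symm <;> simp only [mem_Icc, mem_Ioc] at * <;> omega
  calc ∑ j ∈ Icc 1 n, f j = ∑ j ∈ Icc 1 m, f j + ∑ j ∈ Icc 1 (n - m), f j := by
        rw [← hupper, hIcc, hIcc, sum_Ioc_consecutive _ m.zero_le hmn]
    _ ≤ ∑ j ∈ Icc 1 m, f j + ∑ j ∈ Icc 1 m, f j := by
        refine add_le_add_right (sum_le_sum_of_subset_of_nonneg (Icc_subset_Icc_right hrest)
          fun j hj _ => hf j (Icc_subset_Icc_right hmn hj)) _
    _ = 2 * ∑ j ∈ Icc 1 m, f j := (two_mul _).symm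

theorem qn_le_rpow_sum_general (n : ℕ) :
    ∑ k ∈ Finset.Icc 1 n, (n.choose k : ℝ) * (n.choose (k - 1) : ℝ) *
        (((k - 1 : ℕ) : ℝ) / (n : ℝ)) ^ (k * (3 * ⌈Real.log n⌉₊)) ≤
      2 * ∑ k ∈ Finset.Icc 1 ((n + 1) / 2),
        (Real.exp 1 / (k : ℝ)) ^ (2 * k) *
          (n : ℝ) ^ (-(k : ℝ) + 3 * (k : ℝ) * ((k : ℝ) - 1) / (n : ℝ)) := by
  have hα : 3 * log n ≤ ((3 * ⌈log n⌉₊ : ℕ) : ℝ) := by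
    push_cast; linarith [Nat.le_ceil (log n)]
  calc _ ≤ ∑ j ∈ Icc 1 n, symmetricMajorant n j := by
        gcongr with j hj
        exact le_symmetricMajorant (mem_Icc.1 hj).1 (mem_Icc.1 hj).2 hα
    _ ≤ 2 * ∑ k ∈ Icc 1 ((n + 1) / 2), symmetricMajorant n k := by
        refine sum_Icc_le_two_mul_sum_Icc_half (fun j _ => ?_) fun j hj => ?_
        · unfold symmetricMajorant; positivity
        · exact symmetricMajorant_reflect (mem_Icc.1 hj).1 (mem_Icc.1 hj).2
    _ ≤ _ := by
        gcongr with k hk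
        obtain ⟨hk1, hkm⟩ := mem_Icc.1 hk
        exact symmetricMajorant_le hk1 (by omega)

/-- For every integer `n ≥ 2`, with `a = 3⌈log n⌉`,
`∑_{k=1}^{n} C(n,k) C(n,k-1) ((k-1)/n)^{k a}
  ≤ 2 ∑_{k=1}^{⌈n/2⌉} (e/k)^{2k} n^{-k + 3k(k-1)/n}`,
where `n^x` is the real power `exp (x log n)`. -/
theorem qn_le_rpow_sum (n : ℕ) (hn : 2 ≤ n) :
    ∑ k ∈ Finset.Icc 1 n, (n.choose k : ℝ) * (n.choose (k - 1) : ℝ) *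
        (((k - 1 : ℕ) : ℝ) / (n : ℝ)) ^ (k * (3 * ⌈Real.log n⌉₊)) ≤
      2 * ∑ k ∈ Finset.Icc 1 ((n + 1) / 2),
        (Real.exp 1 / (k : ℝ)) ^ (2 * k) *
          (n : ℝ) ^ (-(k : ℝ) + 3 * (k : ℝ) * ((k : ℝ) - 1) / (n : ℝ)) :=
  qn_le_rpow_sum_general n
end

section
/- Let n ≥ 60 be an integer and let k be an integer with 1 ≤ k ≤ ⌈n/2⌉. Then (e/k)^{2k} · n^{−k + 3k(k−1)/n} ≤ (1/2)^{k+2}, where n^x denotes the real power exp(x · log n). -/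
set_option maxHeartbeats 1000000

lemma key_ineq (n k : ℕ) (hn : 60 ≤ n) (hk1 : 1 ≤ k) (hk : k ≤ (n + 1) / 2) :
    2 * (k : ℝ) * (1 - Real.log k) +
      (-(k : ℝ) + 3 * (k : ℝ) * ((k : ℝ) - 1) / (n : ℝ)) * Real.log n ≤
      -((k : ℝ) + 2) * Real.log 2 := by
  have hK : (1 : ℝ) ≤ (k : ℝ) := by exact_mod_cast hk1
  have hK0 : (0 : ℝ) < (k : ℝ) := by linarith
  have hN : (60 : ℝ) ≤ (n : ℝ) := by exact_mod_cast hn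
  have hN0 : (0 : ℝ) < (n : ℝ) := by linarith
  have h2k : 2 * k ≤ n + 1 := by
    have := (Nat.le_div_iff_mul_le (by norm_num : 0 < 2)).mp hk
    omega
  have h2K : 2 * (k : ℝ) ≤ (n : ℝ) + 1 := by exact_mod_cast h2k
  set L := Real.log (n : ℝ) with hL
  have hlog2 : (0 : ℝ) < Real.log 2 := Real.log_pos (by norm_num)
  have hexp1 : Real.exp 1 < 2.7182818286 := Real.exp_one_lt_d9
  have hexp1pos : (0 : ℝ) < Real.exp 1 := Real.exp_pos 1
  have he2 : Real.exp 1 * Real.exp 1 < 7.39 := by nlinarith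
  have he2' : Real.exp 2 = Real.exp 1 * Real.exp 1 := by
    rw [← Real.exp_add]; norm_num
  have hL4 : (4 : ℝ) ≤ L := by
    rw [hL, Real.le_log_iff_exp_le hN0]
    have h4 : Real.exp 4 = Real.exp 2 * Real.exp 2 := by
      rw [← Real.exp_add]; norm_num
    rw [h4, he2']
    nlinarith
  have hLpos : (0 : ℝ) < L := by linarith
  rcases eq_or_lt_of_le hk1 with hk1' | hk2
  · -- k = 1
    have hk1'' : (k : ℝ) = 1 := by exact_mod_cast hk1'.symm
    have hL1 : 2 + 3 * Real.log 2 ≤ L := by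
      rw [hL, Real.le_log_iff_exp_le hN0]
      have h8 : (3 : ℝ) * Real.log 2 = Real.log 8 := by
        rw [show (8:ℝ) = 2 ^ (3:ℕ) by norm_num, Real.log_pow]
        push_cast; ring
      have : Real.exp (2 + 3 * Real.log 2) = Real.exp 1 * Real.exp 1 * 8 := by
        rw [Real.exp_add, h8, Real.exp_log (by norm_num : (0:ℝ) < 8), he2']
      rw [this]
      nlinarith
    rw [hk1'']
    have h0 : (-1 + 3 * (1:ℝ) * ((1:ℝ) - 1) / (n : ℝ)) = -1 := by
      norm_num
    rw [h0]
    simp only [Real.log_one]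
    nlinarith
  · -- k ≥ 2
    have hk2' : (2 : ℕ) ≤ k := hk2
    have hK2 : (2 : ℝ) ≤ (k : ℝ) := by exact_mod_cast hk2'
    have hlogK2 : Real.log 2 ≤ Real.log k :=
      Real.log_le_log (by norm_num) hK2
    -- per-factor inequality Q
    have Q : (3 * ((k : ℝ) - 1) / (n : ℝ) - 1) * L ≤
        -2 - 2 * Real.log 2 + 2 * Real.log k := by
      rcases le_or_gt (3 * (k - 1)) 12 with hsm | hbig
      · -- 2 ≤ k ≤ 5
        have hk5 : k ≤ 5 := by omega
        have hK5 : (k : ℝ) ≤ 5 := by exact_mod_cast hk5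
        have hc : 3 * ((k : ℝ) - 1) / (n : ℝ) ≤ 1 / 5 := by
          rw [div_le_iff₀ hN0]
          nlinarith
        linarith [mul_le_mul_of_nonneg_right
          (by linarith : 3 * ((k : ℝ) - 1) / (n : ℝ) - 1 ≤ -(4/5)) (le_of_lt hLpos)]
      · rcases le_or_gt (3 * (k - 1)) n with hmid | hlarge
        · -- k ≥ 6, 3(k-1) ≤ n
          have hk6 : 6 ≤ k := by omega
          have hK6 : (6 : ℝ) ≤ (k : ℝ) := by exact_mod_cast hk6
          have hlog3 : (1 : ℝ) ≤ Real.log 3 := by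
            rw [Real.le_log_iff_exp_le (by norm_num)]
            linarith
          have hlog6 : Real.log 6 = Real.log 2 + Real.log 3 := by
            rw [← Real.log_mul (by norm_num) (by norm_num)]; norm_num
          have hlogK6 : Real.log 6 ≤ Real.log k :=
            Real.log_le_log (by norm_num) hK6
          have hmid'' : 3 * k ≤ n + 3 := by omega
          have hmid' : 3 * ((k : ℝ) - 1) ≤ (n : ℝ) := by
            have : (3 * k : ℝ) ≤ (n : ℝ) + 3 := by exact_mod_cast hmid''
            linarith
          have hc : 3 * ((k : ℝ) - 1) / (n : ℝ) - 1 ≤ 0 := by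
            rw [sub_nonpos, div_le_one hN0]; linarith
          linarith [mul_nonpos_of_nonpos_of_nonneg hc (le_of_lt hLpos)]
        · -- 3(k-1) > n
          have hlarge'' : n + 4 ≤ 3 * k := by omega
          have hlarge' : (n : ℝ) < 3 * ((k : ℝ) - 1) := by
            have : (n : ℝ) + 4 ≤ 3 * (k : ℝ) := by exact_mod_cast hlarge''
            linarith
          have hc : 3 * ((k : ℝ) - 1) / (n : ℝ) ≤ 3 / 2 := by
            rw [div_le_iff₀ hN0]
            linarith
          have hNK : (n : ℝ) / 3 ≤ (k : ℝ) := by linarith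
          have hlogNK : L - Real.log 3 ≤ Real.log k := by
            have h1 : Real.log ((n : ℝ) / 3) ≤ Real.log k :=
              Real.log_le_log (by positivity) hNK
            rw [Real.log_div (ne_of_gt hN0) (by norm_num)] at h1
            exact h1
          have hlog6le : Real.log 6 ≤ 2 := by
            rw [Real.log_le_iff_le_exp (by norm_num), he2']
            nlinarith [Real.exp_one_gt_d9]
          have hlog6 : Real.log 6 = Real.log 2 + Real.log 3 := by
            rw [← Real.log_mul (by norm_num) (by norm_num)]; norm_num
          linarith [mul_le_mul_of_nonneg_right
            (by linarith : 3 * ((k : ℝ) - 1) / (n : ℝ) - 1 ≤ 1/2) (le_of_lt hLpos)]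
    -- multiply Q by k and conclude
    have hQk := mul_le_mul_of_nonneg_left Q (le_of_lt hK0)
    have hexp : (-(k : ℝ) + 3 * (k : ℝ) * ((k : ℝ) - 1) / (n : ℝ)) * L =
        (k : ℝ) * ((3 * ((k : ℝ) - 1) / (n : ℝ) - 1) * L) := by
      field_simp
      ring
    rw [hexp]
    have step : 2 * (k : ℝ) * (1 - Real.log k) +
        (k : ℝ) * ((3 * ((k : ℝ) - 1) / (n : ℝ) - 1) * L) ≤
        2 * (k : ℝ) * (1 - Real.log k) +
        (k : ℝ) * (-2 - 2 * Real.log 2 + 2 * Real.log k) := by linarith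
    have step2 : 2 * (k : ℝ) * (1 - Real.log k) +
        (k : ℝ) * (-2 - 2 * Real.log 2 + 2 * Real.log k) =
        -2 * (k : ℝ) * Real.log 2 := by ring
    rw [step2] at step
    refine step.trans ?_
    nlinarith [mul_nonneg (sub_nonneg.mpr hK2) hlog2.le]

/-- For `n ≥ 60` and `1 ≤ k ≤ ⌈n/2⌉`,
`(e/k)^{2k} * n^{-k + 3k(k-1)/n} ≤ (1/2)^{k+2}`,
where `n^x` is the real power `exp (x log n)`. -/
theorem term_bound (n k : ℕ) (hn : 60 ≤ n) (hk1 : 1 ≤ k) (hk : k ≤ (n + 1) / 2) :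
    (Real.exp 1 / (k : ℝ)) ^ (2 * k) *
        (n : ℝ) ^ (-(k : ℝ) + 3 * (k : ℝ) * ((k : ℝ) - 1) / (n : ℝ)) ≤
      (1 / 2 : ℝ) ^ (k + 2) := by
  have hK : (1 : ℝ) ≤ (k : ℝ) := by exact_mod_cast hk1
  have hK0 : (0 : ℝ) < (k : ℝ) := by linarith
  have hN : (60 : ℝ) ≤ (n : ℝ) := by exact_mod_cast hn
  have hN0 : (0 : ℝ) < (n : ℝ) := by linarith
  have hbase : (0 : ℝ) < Real.exp 1 / (k : ℝ) := by positivity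
  have h1 : (Real.exp 1 / (k : ℝ)) ^ (2 * k) =
      Real.exp (2 * (k : ℝ) * (1 - Real.log k)) := by
    rw [← Real.exp_log (pow_pos hbase (2 * k)), Real.log_pow,
      Real.log_div (Real.exp_ne_zero 1) (ne_of_gt hK0), Real.log_exp]
    push_cast
    ring_nf
  have h2 : (n : ℝ) ^ (-(k : ℝ) + 3 * (k : ℝ) * ((k : ℝ) - 1) / (n : ℝ)) =
      Real.exp (Real.log n * (-(k : ℝ) + 3 * (k : ℝ) * ((k : ℝ) - 1) / (n : ℝ))) :=
    Real.rpow_def_of_pos hN0 _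
  have h3 : ((1 : ℝ) / 2) ^ (k + 2) = Real.exp (-((k : ℝ) + 2) * Real.log 2) := by
    rw [← Real.exp_log (pow_pos (by norm_num : (0:ℝ) < 1/2) (k + 2)), Real.log_pow]
    congr 1
    rw [show ((1:ℝ)/2) = 2⁻¹ by norm_num, Real.log_inv]
    push_cast
    ring
  rw [h1, h2, h3, ← Real.exp_add, Real.exp_le_exp,
    mul_comm (Real.log (n : ℝ))]
  exact key_ineq n k hn hk1 hk
end

section
/- (Rado's Theorem.) Let M be a matroid of rank n on a ground set E, and let S_1, ..., S_n be sets of elements of M. Then there exists a basis of M of the form {e_1, ..., e_n} with e_i ∈ S_i for each i and the e_i pairwise distinct (a transversal basis of (S_1, ..., S_n)) if and only if for every subset X ⊆ {1, ..., n} one has r(∪_{i ∈ X} S_i) ≥ |X|, where r is the rank function of M. -/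
/-!
Necessity is clear. For sufficiency, first shrink every `S i` to a finite set (the union of
witnesses to the condition), then delete elements one at a time. If `x ≠ y` lie in `S i` and
deleting either one breaks the condition, there are `X, Y ∌ i` whose unions
`A = (S i \ {x}) ∪ ⋃_X S` and `B = (S i \ {y}) ∪ ⋃_Y S` have ranks at most `|X|` and `|Y|`;
since `A ∪ B ⊇ ⋃_{X ∪ Y ∪ {i}} S` and `A ∩ B ⊇ ⋃_{X ∩ Y} S`, submodularity gives
`|X ∪ Y| + 1 + |X ∩ Y| ≤ |X| + |Y|`, absurd. Once every `S i` is a singleton `{e i}`, the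
condition for all indices says `range e` has rank `n`, so it is an independent set of size
`n = r(M)`, i.e. a basis.
-/

/-- The rank of a set `X` in a matroid `M` : the supremum of the cardinalities of
independent subsets of `X` (as an extended natural number). -/
noncomputable def Matroid.rankFn {α : Type*} (M : Matroid α) (X : Set α) : ℕ∞ :=
  sSup (Set.encard '' {I | M.Indep I ∧ I ⊆ X})

open Set Function

namespace Matroid

variable {α ι : Type*} {M : Matroid α}

lemma rankFn_eq_eRk (M : Matroid α) (X : Set α) : M.rankFn X = M.eRk X := by
  refine le_antisymm (sSup_le ?_) ?_
  · rintro _ ⟨I, ⟨hI, hIX⟩, rfl⟩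
    exact hI.encard_le_eRk_of_subset hIX
  · obtain ⟨I, hI⟩ := M.exists_isBasis' X
    exact hI.eRk_eq_encard ▸ le_sSup ⟨I, ⟨hI.indep, hI.subset⟩, rfl⟩

def RadoCondition (M : Matroid α) (S : ι → Set α) : Prop :=
  ∀ X : Finset ι, (X.card : ℕ∞) ≤ M.eRk (⋃ i ∈ X, S i)

lemma radoCondition_of_indep_transversal {S : ι → Set α} {e : ι → α} (he : Injective e)
    (heS : ∀ i, e i ∈ S i) (hind : M.Indep (range e)) : M.RadoCondition S := by
  intro X
  have hsub : e '' X ⊆ ⋃ i ∈ X, S i := by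
    rintro _ ⟨i, hi, rfl⟩
    exact mem_biUnion hi (heS i)
  calc (X.card : ℕ∞) = (e '' X).encard := by
        rw [he.encard_image, encard_coe_eq_coe_finsetCard]
    _ ≤ M.eRk (⋃ i ∈ X, S i) :=
        (hind.subset (image_subset_range e _)).encard_le_eRk_of_subset hsub

namespace RadoCondition

variable {S : ι → Set α}

lemma exists_finite_inter [Finite ι] (h : M.RadoCondition S) :
    ∃ U : Set α, U.Finite ∧ M.RadoCondition (fun i ↦ S i ∩ U) := by
  choose I hIX hI hIcard using fun X ↦ le_eRk_iff.1 (h X)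
  refine ⟨⋃ X, I X, finite_iUnion fun X ↦ finite_of_encard_eq_coe (hIcard X), fun X ↦ ?_⟩
  rw [← hIcard X, ← iUnion₂_inter]
  exact (hI X).encard_le_eRk_of_subset (subset_inter (hIX X) (subset_iUnion I X))

lemma exists_indep_transversal_of_subsingleton [Finite ι] (h : M.RadoCondition S)
    (hS : ∀ i, (S i).Subsingleton) :
    ∃ e : ι → α, Injective e ∧ (∀ i, e i ∈ S i) ∧ M.Indep (range e) := by
  have hne : ∀ i, (S i).Nonempty := by
    intro i
    by_contra hemp
    simpa [not_nonempty_iff_eq_empty.1 hemp] using h {i}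
  choose e he using hne
  obtain rfl : S = fun i ↦ {e i} := funext fun i ↦ (hS i).eq_singleton_of_mem (he i)
  cases nonempty_fintype ι
  have hrank : ENat.card ι ≤ M.eRk (range e) := by
    simpa [← iUnion_singleton_eq_range] using h Finset.univ
  have hcard : (range e).encard ≤ ENat.card ι := by
    simpa [← image_univ] using encard_image_le e univ
  have hrange : (range e).encard = ENat.card ι :=
    le_antisymm hcard (hrank.trans (M.eRk_le_encard _))
  refine ⟨e, injOn_univ.1 (finite_univ.injOn_of_encard_image_eq ?_), he, ?_⟩
  · rwa [image_univ, encard_univ]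
  · exact (indep_iff_eRk_eq_encard_of_finite (finite_range e)).2
      (le_antisymm (M.eRk_le_encard _) (hrange.le.trans hrank))

section update

variable [DecidableEq ι]

lemma exists_eRk_le_of_not_update {i : ι} {T : Set α} (h : M.RadoCondition S)
    (hT : ¬ M.RadoCondition (update S i T)) :
    ∃ X : Finset ι, i ∉ X ∧ M.eRk (T ∪ ⋃ j ∈ X, S j) ≤ X.card := by
  have hunion : ∀ X : Finset ι, i ∉ X → ⋃ j ∈ X, update S i T j = ⋃ j ∈ X, S j :=
    fun X hiX ↦ iUnion₂_congr fun j hj ↦ update_of_ne (ne_of_mem_of_not_mem hj hiX) _ _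
  simp only [RadoCondition, not_forall, not_le] at hT
  obtain ⟨X, hX⟩ := hT
  have hmem : i ∈ X := by
    by_contra hiX
    exact (hunion X hiX ▸ hX).not_ge (h X)
  obtain ⟨X, hiX, rfl⟩ : ∃ X₀, i ∉ X₀ ∧ insert i X₀ = X :=
    ⟨X.erase i, Finset.notMem_erase i X, Finset.insert_erase hmem⟩
  rw [Finset.set_biUnion_insert_update _ hiX, Finset.card_insert_of_notMem hiX, Nat.cast_add,
    Nat.cast_one, ENat.lt_add_one_iff (ENat.natCast_ne_top _)] at hX
  exact ⟨X, hiX, hX⟩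

lemma update_diff_singleton_or {i : ι} {x y : α} (h : M.RadoCondition S) (hxy : x ≠ y) :
    M.RadoCondition (update S i (S i \ {x})) ∨ M.RadoCondition (update S i (S i \ {y})) := by
  by_contra! hfail
  obtain ⟨X, hiX, hX⟩ := h.exists_eRk_le_of_not_update hfail.1
  obtain ⟨Y, hiY, hY⟩ := h.exists_eRk_le_of_not_update hfail.2
  set A := (S i \ {x}) ∪ ⋃ j ∈ X, S j
  set B := (S i \ {y}) ∪ ⋃ j ∈ Y, S j
  have hiXY : i ∉ X ∪ Y := by simp [hiX, hiY]
  have hunion : ⋃ j ∈ insert i (X ∪ Y), S j ⊆ A ∪ B := by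
    rw [Finset.set_biUnion_insert, Finset.set_biUnion_union]
    rintro a (ha | ha | ha)
    · obtain rfl | hax := eq_or_ne a x
      · exact Or.inr (Or.inl ⟨ha, hxy⟩)
      · exact Or.inl (Or.inl ⟨ha, hax⟩)
    · exact Or.inl (Or.inr ha)
    · exact Or.inr (Or.inr ha)
  have hinter : ⋃ j ∈ X ∩ Y, S j ⊆ A ∩ B := by
    simp only [Finset.mem_inter, iUnion_subset_iff, and_imp]
    exact fun j hjX hjY ↦ subset_inter (subset_union_of_subset_right (subset_biUnion_of_mem hjX) _)
      (subset_union_of_subset_right (subset_biUnion_of_mem hjY) _)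
  have hsum : (((X ∩ Y).card + ((X ∪ Y).card + 1) : ℕ) : ℕ∞) ≤ X.card + Y.card := by
    have hXY := h (insert i (X ∪ Y))
    rw [Finset.card_insert_of_notMem hiXY] at hXY
    push_cast
    calc _ ≤ M.eRk (A ∩ B) + M.eRk (A ∪ B) :=
          add_le_add ((h _).trans (M.eRk_mono hinter)) (hXY.trans (M.eRk_mono hunion))
      _ ≤ M.eRk A + M.eRk B := M.eRk_inter_add_eRk_union_le A B
      _ ≤ X.card + Y.card := add_le_add hX hY
  have := Finset.card_union_add_card_inter X Y
  norm_cast at hsum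
  omega

end update

lemma exists_indep_transversal_of_finite [Finite ι] (h : M.RadoCondition S)
    (hS : ∀ i, (S i).Finite) :
    ∃ e : ι → α, Injective e ∧ (∀ i, e i ∈ S i) ∧ M.Indep (range e) := by
  classical
  cases nonempty_fintype ι
  induction hN : ∑ i, (S i).ncard using Nat.strong_induction_on generalizing S with
  | _ N ih =>
    by_cases hsub : ∀ i, (S i).Subsingleton
    · exact h.exists_indep_transversal_of_subsingleton hsub
    obtain ⟨i, hi⟩ := not_forall.1 hsub
    obtain ⟨x, hx, y, hy, hxy⟩ := not_subsingleton_iff.1 hi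
    obtain ⟨z, hz, hz'⟩ : ∃ z ∈ S i, M.RadoCondition (update S i (S i \ {z})) :=
      (h.update_diff_singleton_or hxy).elim (⟨x, hx, ·⟩) (⟨y, hy, ·⟩)
    have hle : update S i (S i \ {z}) ≤ S := update_le_self_iff.2 sdiff_subset
    have hlt : ∑ j, (update S i (S i \ {z}) j).ncard < N := hN ▸ Finset.sum_lt_sum
      (fun j _ ↦ ncard_le_ncard (hle j) (hS j))
      ⟨i, Finset.mem_univ i, by simpa using ncard_sdiff_singleton_lt_of_mem hz (hS i)⟩
    obtain ⟨e, he, heS, hind⟩ := ih _ hlt hz' (fun j ↦ (hS j).subset (hle j)) rfl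
    exact ⟨e, he, fun j ↦ hle j (heS j), hind⟩

end RadoCondition

theorem exists_indep_transversal_iff [Finite ι] {S : ι → Set α} :
    (∃ e : ι → α, Injective e ∧ (∀ i, e i ∈ S i) ∧ M.Indep (range e)) ↔ M.RadoCondition S := by
  refine ⟨fun ⟨e, he, heS, hind⟩ ↦ radoCondition_of_indep_transversal he heS hind, fun h ↦ ?_⟩
  obtain ⟨U, hU, hSU⟩ := h.exists_finite_inter
  obtain ⟨e, he, heS, hind⟩ := hSU.exists_indep_transversal_of_finite fun i ↦ hU.inter_of_right _
  exact ⟨e, he, fun i ↦ (heS i).1, hind⟩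

lemma isBase_range_iff_indep [Finite ι] {e : ι → α} (he : Injective e)
    (hrank : M.eRank = ENat.card ι) : M.IsBase (range e) ↔ M.Indep (range e) := by
  refine ⟨IsBase.indep, fun hind ↦ hind.isBase_of_eRk_ge (finite_range e) ?_⟩
  rw [hind.eRk_eq_encard, hrank]
  exact he.encard_range

end Matroid

/-- Rado's theorem: if `M` is a rank-`n` matroid and `S 1, …, S n` are sets of elements
of `M`, then there is a basis of `M` of the form `{e 1, …, e n}` with the `e i` pairwise
distinct and `e i ∈ S i` for each `i` (a transversal basis of `(S 1, …, S n)`) if and only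
if `r(⋃_{i ∈ X} S i) ≥ |X|` for every `X ⊆ {1, …, n}`. -/
theorem rado {α : Type*} (n : ℕ) (M : Matroid α) (hrank : M.rankFn M.E = (n : ℕ∞))
    (S : Fin n → Set α) :
    (∃ e : Fin n → α, Function.Injective e ∧ (∀ i, e i ∈ S i) ∧ M.IsBase (Set.range e)) ↔
      ∀ X : Finset (Fin n), (X.card : ℕ∞) ≤ M.rankFn (⋃ i ∈ X, S i) := by
  have hrank' : M.eRank = ENat.card (Fin n) := by
    rw [← M.eRk_ground, ← M.rankFn_eq_eRk, hrank, ENat.card_eq_coe_fintype_card, Fintype.card_fin]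
  simp only [Matroid.rankFn_eq_eRk]
  refine Iff.trans ?_ Matroid.exists_indep_transversal_iff
  exact exists_congr fun e ↦ and_congr_right fun he ↦ and_congr_right fun _ ↦
    Matroid.isBase_range_iff_indep he hrank'
end
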